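/- arXiv:2206.02271 — 2 statements merged into one kernel-verified Lean document; each statement's English description precedes it below -/
import Mathlib

section
/- Let V, W be independent non-negative random variables with P(V > v) ~ c_V v^{-γ_V} and P(W > w) ~ c_W w^{-γ_W} as v, w → ∞, where 0 < γ_V < γ_W < 2 and c_V, c_W > 0. Then P(V·W > z) ~ c_V · E[W^{γ_V}] · z^{-γ_V} as z → ∞. -/
/-!
By independence, `P(VW > z) = ∫ P(V > z/W(ω)) dμ(ω)`. After division by `c_V z^{-γ_V}` the
integrand equals `(P(V > z/w) / (c_V (z/w)^{-γ_V})) · w^{γ_V}`, which tends to `w^{γ_V}` and is at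
most `2 w^{γ_V}` as soon as `z/w` is large. Fixing `γ_V/γ_W < β < 1`, this is the case on
`{W ≤ z^β}`, where dominated convergence applies; on `{W > z^β}` the integrand is at most
`P(W > z^β) / (c_V z^{-γ_V}) = O(z^{γ_V - βγ_W}) → 0`. The tail bound on `W` also makes
`E[W^{γ_V}]` finite, by the layer-cake formula.
-/

open MeasureTheory Filter ProbabilityTheory Set Topology

lemma eventually_le_two_mul_of_tendsto_div_one {α : Type*} {l : Filter α} {f g : α → ℝ}
    (hfg : Tendsto (fun x => f x / g x) l (𝓝 1)) (hg : ∀ᶠ x in l, 0 < g x) :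
    ∀ᶠ x in l, f x ≤ 2 * g x := by
  filter_upwards [hfg.eventually_lt_const one_lt_two, hg] with x hlt hgx
  exact (div_le_iff₀ hgx).1 hlt.le

lemma integral_rpow_pos_of_measure_gt_ne_zero {Ω : Type*} [MeasurableSpace Ω] {μ : Measure Ω}
    {X : Ω → ℝ} (hX0 : ∀ ω, 0 ≤ X ω) {p t : ℝ} (hint : Integrable (fun ω => X ω ^ p) μ)
    (ht : 0 ≤ t) (hpos : μ {ω | X ω > t} ≠ 0) : 0 < ∫ ω, X ω ^ p ∂μ := by
  refine (integral_pos_iff_support_of_nonneg (fun ω => Real.rpow_nonneg (hX0 ω) p) hint).2 ?_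
  refine (pos_iff_ne_zero.2 hpos).trans_le (measure_mono fun ω hω => ?_)
  exact (Real.rpow_pos_of_pos (ht.trans_lt hω) p).ne'

lemma integrable_rpow_of_tail_le {Ω : Type*} [MeasurableSpace Ω] {μ : Measure Ω}
    [IsFiniteMeasure μ] {X : Ω → ℝ} (hX : Measurable X) (hX0 : ∀ ω, 0 ≤ X ω) {p γ C : ℝ}
    (hp : 0 < p) (hpγ : p < γ) (htail : ∀ᶠ t in atTop, (μ {ω | X ω > t}).toReal ≤ C * t ^ (-γ)) :
    Integrable (fun ω => X ω ^ p) μ := by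
  obtain ⟨t₀, ht₀⟩ := (htail.and (eventually_gt_atTop 0)).exists_forall_of_atTop
  have ht₀pos : 0 < t₀ := (ht₀ t₀ le_rfl).2
  refine (lintegral_ofReal_ne_top_iff_integrable (hX.pow_const p).aestronglyMeasurable
    (ae_of_all _ fun ω => Real.rpow_nonneg (hX0 ω) p)).1 ?_
  rw [lintegral_rpow_eq_lintegral_meas_lt_mul μ (ae_of_all _ hX0) hX.aemeasurable hp,
    ← Ioc_union_Ioi_eq_Ioi ht₀pos.le, lintegral_union measurableSet_Ioi Ioc_disjoint_Ioi_same]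
  refine ENNReal.mul_ne_top ENNReal.ofReal_ne_top (ENNReal.add_ne_top.2 ⟨?_, ?_⟩)
  · have hint : IntegrableOn (fun t : ℝ => μ.real univ * t ^ (p - 1)) (Ioc 0 t₀) := by
      have := intervalIntegral.intervalIntegrable_rpow' (a := 0) (b := t₀)
        (show (-1 : ℝ) < p - 1 by linarith)
      rw [intervalIntegrable_iff, uIoc_of_le ht₀pos.le] at this
      exact Integrable.const_mul this _
    refine ne_top_of_le_ne_top hint.setLIntegral_lt_top.ne
      (setLIntegral_mono' measurableSet_Ioc fun t _ => ?_)
    rw [ENNReal.ofReal_mul measureReal_nonneg, ofReal_measureReal]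
    gcongr
    exact subset_univ _
  · have hint : IntegrableOn (fun t : ℝ => C * t ^ (-γ) * t ^ (p - 1)) (Ioi t₀) := by
      have h : IntegrableOn (fun t : ℝ => C * t ^ (p - γ - 1)) (Ioi t₀) :=
        Integrable.const_mul (integrableOn_Ioi_rpow_of_lt (by linarith) ht₀pos) C
      refine h.congr_fun (fun t ht => ?_) measurableSet_Ioi
      rw [mul_assoc, ← Real.rpow_add (ht₀pos.trans ht)]
      ring_nf
    refine ne_top_of_le_ne_top hint.setLIntegral_lt_top.ne
      (setLIntegral_mono' measurableSet_Ioi fun t ht => ?_)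
    have hle := (ht₀ t (le_of_lt ht)).1
    rw [ENNReal.ofReal_mul (ENNReal.toReal_nonneg.trans hle)]
    gcongr
    exact ENNReal.le_ofReal_iff_toReal_le (measure_ne_top _ _) (ENNReal.toReal_nonneg.trans hle)
      |>.2 hle

noncomputable def productTailRatio (ν : Measure ℝ) (c γ z w : ℝ) : ℝ :=
  (ν {v | v * w > z}).toReal / (c * z ^ (-γ))

section productTailRatio

variable {ν : Measure ℝ} {c γ z w : ℝ}

lemma productTailRatio_zero_right (hz : 0 ≤ z) : productTailRatio ν c γ z 0 = 0 := by
  simp [productTailRatio, not_lt.2 hz]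

lemma productTailRatio_eq (hz : 0 < z) (hw : 0 < w) :
    productTailRatio ν c γ z w = (ν (Ioi (z / w))).toReal / (c * (z / w) ^ (-γ)) * w ^ γ := by
  have hset : {v | v * w > z} = Ioi (z / w) := by
    ext v
    simp [div_lt_iff₀ hw]
  rw [productTailRatio, hset, Real.div_rpow hz.le hw.le, Real.rpow_neg hw.le, div_inv_eq_mul,
    ← mul_assoc, div_mul_eq_mul_div, mul_div_mul_right _ _ (Real.rpow_pos_of_pos hw γ).ne']

lemma norm_productTailRatio_le [IsProbabilityMeasure ν] (hc : 0 ≤ c) (hz : 0 ≤ z) :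
    ‖productTailRatio ν c γ z w‖ ≤ (c * z ^ (-γ))⁻¹ := by
  have hden : 0 ≤ c * z ^ (-γ) := by positivity
  rw [productTailRatio, Real.norm_of_nonneg (div_nonneg ENNReal.toReal_nonneg hden),
    div_eq_mul_inv]
  exact mul_le_of_le_one_left (inv_nonneg.2 hden) measureReal_le_one

lemma measurable_productTailRatio (ν : Measure ℝ) [SFinite ν] (c γ z : ℝ) :
    Measurable (productTailRatio ν c γ z) :=
  ((measurable_measure_prodMk_right (measurableSet_lt measurable_const
    (measurable_fst.mul measurable_snd))).ennreal_toReal).div_const _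

end productTailRatio

lemma measure_mul_gt_toReal_eq_integral {Ω : Type*} [MeasurableSpace Ω] {μ : Measure Ω}
    [IsFiniteMeasure μ] {V W : Ω → ℝ} (hV : Measurable V) (hW : Measurable W)
    (hindep : IndepFun V W μ) (z : ℝ) :
    (μ {ω | V ω * W ω > z}).toReal = ∫ ω, ((μ.map V) {v | v * W ω > z}).toReal ∂μ := by
  have hS : MeasurableSet {p : ℝ × ℝ | p.1 * p.2 > z} :=
    measurableSet_lt measurable_const (measurable_fst.mul measurable_snd)
  have hlaw := (indepFun_iff_map_prod_eq_prod_map_map hV.aemeasurable hW.aemeasurable).1 hindep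
  have hmeas : Measurable fun w => (μ.map V) {v | v * w > z} := measurable_measure_prodMk_right hS
  have hlint : μ {ω | V ω * W ω > z} = ∫⁻ ω, (μ.map V) {v | v * W ω > z} ∂μ := by
    calc μ {ω | V ω * W ω > z} = (μ.map fun ω => (V ω, W ω)) {p | p.1 * p.2 > z} :=
          (Measure.map_apply (hV.prodMk hW) hS).symm
      _ = ∫⁻ w, (μ.map V) {v | v * w > z} ∂(μ.map W) := by
          rw [hlaw, Measure.prod_apply_symm hS]; rfl
      _ = ∫⁻ ω, (μ.map V) {v | v * W ω > z} ∂μ := lintegral_map hmeas hW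
  rw [hlint]
  exact (integral_toReal (hmeas.comp hW).aemeasurable
    (ae_of_all _ fun _ => measure_lt_top _ _)).symm

lemma tendsto_setIntegral_le_productTailRatio {Ω : Type*} [MeasurableSpace Ω] {μ : Measure Ω}
    {ν : Measure ℝ} [SFinite ν] {W : Ω → ℝ} {c γ β : ℝ} (hW : Measurable W)
    (hW0 : ∀ ω, 0 ≤ W ω) (hγ : 0 < γ)
    (hν : Tendsto (fun s => (ν (Ioi s)).toReal / (c * s ^ (-γ))) atTop (𝓝 1))
    (hint : Integrable (fun ω => W ω ^ γ) μ) (hβ0 : 0 < β) (hβ1 : β < 1) :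
    Tendsto (fun z => ∫ ω in {ω | W ω ≤ z ^ β}, productTailRatio ν c γ z (W ω) ∂μ) atTop
      (𝓝 (∫ ω, W ω ^ γ ∂μ)) := by
  have hs (z : ℝ) : MeasurableSet {ω | W ω ≤ z ^ β} := measurableSet_le hW measurable_const
  simp_rw [← integral_indicator (hs _)]
  obtain ⟨s₀, hs₀⟩ := eventually_atTop.1 (hν.norm.eventually_lt_const (by norm_num : ‖(1 : ℝ)‖ < 2))
  refine tendsto_integral_filter_of_dominated_convergence (fun ω => 2 * W ω ^ γ)
    (Eventually.of_forall fun z =>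
      (((measurable_productTailRatio ν c γ z).comp hW).indicator (hs z)).aestronglyMeasurable)
    ?_ (hint.const_mul 2) (ae_of_all _ fun ω => ?_)
  · filter_upwards [(tendsto_rpow_atTop (sub_pos.2 hβ1)).eventually_ge_atTop s₀,
      eventually_gt_atTop 0] with z hzs hz
    refine ae_of_all _ fun ω => ?_
    by_cases hωz : W ω ≤ z ^ β
    · rw [indicator_of_mem (show ω ∈ {ω | W ω ≤ z ^ β} from hωz)]
      rcases (hW0 ω).eq_or_lt with hω0 | hω0
      · rw [← hω0, productTailRatio_zero_right hz.le, norm_zero, Real.zero_rpow hγ.ne', mul_zero]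
      · have hzω : z ^ (1 - β) ≤ z / W ω := by
          rw [Real.rpow_sub hz, Real.rpow_one]
          exact div_le_div_of_nonneg_left hz.le hω0 hωz
        rw [productTailRatio_eq hz hω0, norm_mul, Real.norm_of_nonneg (Real.rpow_nonneg (hW0 ω) _)]
        gcongr
        exact (hs₀ _ (hzs.trans hzω)).le
    · rw [indicator_of_notMem (show ω ∉ {ω | W ω ≤ z ^ β} from hωz), norm_zero]
      exact mul_nonneg zero_le_two (Real.rpow_nonneg (hW0 ω) _)
  · rcases (hW0 ω).eq_or_lt with hω0 | hω0
    · refine tendsto_const_nhds.congr' ?_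
      filter_upwards [eventually_ge_atTop 0] with z hz
      rw [← hω0, Real.zero_rpow hγ.ne', eq_comm, indicator_apply_eq_zero, ← hω0]
      exact fun _ => productTailRatio_zero_right hz
    · have hratio := (hν.comp (tendsto_id.atTop_div_const hω0)).mul_const (W ω ^ γ)
      rw [one_mul] at hratio
      refine hratio.congr' ?_
      filter_upwards [(tendsto_rpow_atTop hβ0).eventually_ge_atTop (W ω),
        eventually_gt_atTop 0] with z hωz hz
      rw [indicator_of_mem (show ω ∈ {ω | W ω ≤ z ^ β} from hωz), productTailRatio_eq hz hω0]
      rfl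

lemma tendsto_setIntegral_gt_productTailRatio {Ω : Type*} [MeasurableSpace Ω] {μ : Measure Ω}
    [IsFiniteMeasure μ] {ν : Measure ℝ} [IsProbabilityMeasure ν] {W : Ω → ℝ} {c γ γ' C β : ℝ}
    (hc : 0 < c) (hWtail : ∀ᶠ t in atTop, (μ {ω | W ω > t}).toReal ≤ C * t ^ (-γ'))
    (hβ : 0 < β) (hβγ : γ < β * γ') :
    Tendsto (fun z => ∫ ω in {ω | W ω > z ^ β}, productTailRatio ν c γ z (W ω) ∂μ) atTop
      (𝓝 0) := by
  have hbound : Tendsto (fun z : ℝ => C / c * z ^ (-(β * γ' - γ))) atTop (𝓝 0) := by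
    simpa using (tendsto_rpow_neg_atTop (sub_pos.2 hβγ)).const_mul (C / c)
  refine squeeze_zero_norm' ?_ hbound
  filter_upwards [(tendsto_rpow_atTop hβ).eventually hWtail, eventually_gt_atTop 0] with z hzβ hz
  calc ‖∫ ω in {ω | W ω > z ^ β}, productTailRatio ν c γ z (W ω) ∂μ‖
      ≤ (c * z ^ (-γ))⁻¹ * μ.real {ω | W ω > z ^ β} :=
        norm_setIntegral_le_of_norm_le_const (measure_lt_top _ _) fun ω _ =>
          norm_productTailRatio_le hc.le hz.le
    _ ≤ (c * z ^ (-γ))⁻¹ * (C * (z ^ β) ^ (-γ')) := by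
        rw [measureReal_def]
        gcongr
    _ = C / c * z ^ (-(β * γ' - γ)) := by
        rw [← Real.rpow_mul hz.le, show -(β * γ' - γ) = β * -γ' - -γ by ring,
          Real.rpow_sub hz]
        field_simp

theorem tendsto_integral_productTailRatio {Ω : Type*} [MeasurableSpace Ω] {μ : Measure Ω}
    [IsFiniteMeasure μ] {ν : Measure ℝ} [IsProbabilityMeasure ν] {W : Ω → ℝ} {c γ γ' C : ℝ}
    (hW : Measurable W) (hW0 : ∀ ω, 0 ≤ W ω) (hγ : 0 < γ) (hγγ' : γ < γ') (hc : 0 < c)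
    (hν : Tendsto (fun s => (ν (Ioi s)).toReal / (c * s ^ (-γ))) atTop (𝓝 1))
    (hWtail : ∀ᶠ t in atTop, (μ {ω | W ω > t}).toReal ≤ C * t ^ (-γ')) :
    Tendsto (fun z => ∫ ω, productTailRatio ν c γ z (W ω) ∂μ) atTop
      (𝓝 (∫ ω, W ω ^ γ ∂μ)) := by
  have hγ' : 0 < γ' := hγ.trans hγγ'
  obtain ⟨β, hγβ, hβ1⟩ := exists_between ((div_lt_one hγ').2 hγγ')
  have hβ0 : 0 < β := (div_pos hγ hγ').trans hγβ
  have hβγ : γ < β * γ' := (div_lt_iff₀ hγ').1 hγβ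
  have hlim := (tendsto_setIntegral_le_productTailRatio hW hW0 hγ hν
    (integrable_rpow_of_tail_le hW hW0 hγ hγγ' hWtail) hβ0 hβ1).add
    (tendsto_setIntegral_gt_productTailRatio (ν := ν) hc hWtail hβ0 hβγ)
  rw [add_zero] at hlim
  refine hlim.congr' ?_
  filter_upwards [eventually_gt_atTop 0] with z hz
  have hcompl : {ω | W ω ≤ z ^ β}ᶜ = {ω | W ω > z ^ β} := by
    simp only [compl_ofPred, not_le]
  rw [← hcompl]
  exact integral_add_compl (measurableSet_le hW measurable_const)
    (Integrable.of_bound ((measurable_productTailRatio ν c γ z).comp hW).aestronglyMeasurable _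
      (ae_of_all _ fun _ => norm_productTailRatio_le hc.le hz.le))

theorem stmt6_general {Ω : Type*} [MeasurableSpace Ω] (μ : Measure Ω) [IsProbabilityMeasure μ]
    (V W : Ω → ℝ) (hVmeas : Measurable V) (hWmeas : Measurable W)
    (hWpos : ∀ ω, 0 ≤ W ω)
    (hindep : IndepFun V W μ)
    (γV γW cV cW : ℝ) (hγV : 0 < γV) (hγ : γV < γW)
    (hcV : 0 < cV) (hcW : 0 < cW)
    (htailV : Tendsto (fun v : ℝ => (μ {ω | V ω > v}).toReal / (cV * v ^ (-γV)))
      atTop (nhds 1))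
    (htailW : Tendsto (fun w : ℝ => (μ {ω | W ω > w}).toReal / (cW * w ^ (-γW)))
      atTop (nhds 1)) :
    Tendsto (fun z : ℝ =>
        (μ {ω | V ω * W ω > z}).toReal / (cV * (∫ ω, W ω ^ γV ∂μ) * z ^ (-γV)))
      atTop (nhds 1) := by
  have hWtail : ∀ᶠ t in atTop, (μ {ω | W ω > t}).toReal ≤ 2 * cW * t ^ (-γW) := by
    simpa only [mul_assoc] using eventually_le_two_mul_of_tendsto_div_one htailW
      ((eventually_gt_atTop 0).mono fun t ht => by positivity)
  have := Measure.isProbabilityMeasure_map (μ := μ) hVmeas.aemeasurable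
  have hVlaw : Tendsto (fun s => ((μ.map V) (Ioi s)).toReal / (cV * s ^ (-γV))) atTop (𝓝 1) := by
    refine htailV.congr fun s => ?_
    rw [Measure.map_apply hVmeas measurableSet_Ioi]
    rfl
  obtain ⟨t, htpos, ht0⟩ := ((htailW.eventually (lt_mem_nhds one_pos)).and
    (eventually_ge_atTop 0)).exists
  have hI : 0 < ∫ ω, W ω ^ γV ∂μ := integral_rpow_pos_of_measure_gt_ne_zero hWpos
    (integrable_rpow_of_tail_le hWmeas hWpos hγV hγ hWtail) ht0 fun h => by simp [h] at htpos
  have hlim := (tendsto_integral_productTailRatio hWmeas hWpos hγV hγ hcV hVlaw hWtail).div_const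
    (∫ ω, W ω ^ γV ∂μ)
  rw [div_self hI.ne'] at hlim
  refine hlim.congr fun z => ?_
  simp only [productTailRatio, integral_div,
    ← measure_mul_gt_toReal_eq_integral hVmeas hWmeas hindep]
  ring

/-- Breiman-type lemma: if `V, W ≥ 0` are independent with
`P(V > v) ~ c_V v^{-γ_V}` and `P(W > w) ~ c_W w^{-γ_W}`, `0 < γ_V < γ_W < 2`, then
`P(V·W > z) ~ c_V E[W^{γ_V}] z^{-γ_V}` as `z → ∞`. -/
theorem stmt6 {Ω : Type*} [MeasurableSpace Ω] (μ : Measure Ω) [IsProbabilityMeasure μ]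
    (V W : Ω → ℝ) (hVmeas : Measurable V) (hWmeas : Measurable W)
    (hVpos : ∀ ω, 0 ≤ V ω) (hWpos : ∀ ω, 0 ≤ W ω)
    (hindep : IndepFun V W μ)
    (γV γW cV cW : ℝ) (hγV : 0 < γV) (hγ : γV < γW) (hγW : γW < 2)
    (hcV : 0 < cV) (hcW : 0 < cW)
    (htailV : Tendsto (fun v : ℝ => (μ {ω | V ω > v}).toReal / (cV * v ^ (-γV)))
      atTop (nhds 1))
    (htailW : Tendsto (fun w : ℝ => (μ {ω | W ω > w}).toReal / (cW * w ^ (-γW)))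
      atTop (nhds 1)) :
    Tendsto (fun z : ℝ =>
        (μ {ω | V ω * W ω > z}).toReal / (cV * (∫ ω, W ω ^ γV ∂μ) * z ^ (-γV)))
      atTop (nhds 1) :=
  stmt6_general μ V W hVmeas hWmeas hWpos hindep γV γW cV cW hγV hγ hcV hcW htailV htailW
end

section
/- Let V, W be independent non-negative random variables with P(V > v) ~ c_V v^{-γ} and P(W > w) ~ c_W w^{-γ} as v, w → ∞, for the same exponent γ ∈ (0,2) and constants c_V, c_W > 0. Then P(V·W > z) ~ γ c_V c_W · log(z) · z^{-γ} as z → ∞. -/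
/-!
Write `P(VW > z) = ∫ P(W > z / v) dP_V(v)` and fix `A` beyond which both tails are within a
factor `1 ± δ` of their asymptotics. For `v ≤ z / A` the tail of `W` gives
`P(W > z / v) ≈ c_W z^{-γ} v^γ`, so the main term is `c_W z^{-γ} E[V^γ; V ≤ z / A]`. By the
layer-cake formula this truncated moment is `γ ∫_0^x t^{γ-1} P(t < V ≤ x) dt`, whose integrand is
`≈ c_V / t`, hence it grows like `γ c_V log x`. The range `v > z / A` only contributes
`P(V > z / A) = O(z^{-γ}) = o(z^{-γ} log z)`. Hence the relative error is eventually `O(δ)`, for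
every `δ > 0`.
-/

open MeasureTheory Filter ProbabilityTheory Set Asymptotics Topology
open scoped ENNReal

lemma isEquivalent_of_forall_norm_sub_le {α β F : Type*} [NormedAddCommGroup β]
    [SeminormedAddCommGroup F]
    {l : Filter α} {u v : α → β} {e : α → F} (he : e =o[l] v)
    (h : ∀ δ ∈ Ioo (0 : ℝ) 1, ∃ K, ∀ᶠ x in l, ‖u x - v x‖ ≤ δ * ‖v x‖ + K * ‖e x‖) :
    u ~[l] v := by
  refine IsLittleO.of_bound fun c hc => ?_
  obtain ⟨K, hK⟩ := h (min (c / 2) (1 / 2))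
    ⟨by positivity, (min_le_right _ _).trans_lt (by norm_num)⟩
  filter_upwards [hK, (he.norm_left.const_mul_left K).def (half_pos hc)] with x hx hex
  have hδ : min (c / 2) (1 / 2) * ‖v x‖ ≤ c / 2 * ‖v x‖ :=
    mul_le_mul_of_nonneg_right (min_le_left _ _) (norm_nonneg _)
  rw [Real.norm_eq_abs] at hex
  simp only [Pi.sub_apply]
  linarith [le_abs_self (K * ‖e x‖)]

lemma rpow_neg_mul_rpow_sub_one {t : ℝ} (ht : 0 < t) (γ : ℝ) : t ^ (-γ) * t ^ (γ - 1) = t⁻¹ := by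
  rw [← Real.rpow_add ht, show -γ + (γ - 1) = -1 by ring, Real.rpow_neg_one]

lemma div_rpow_neg {z v : ℝ} (hz : 0 ≤ z) (hv : 0 ≤ v) (γ : ℝ) :
    (z / v) ^ (-γ) = z ^ (-γ) * v ^ γ := by
  rw [Real.div_rpow hz hv, Real.rpow_neg hv, div_inv_eq_mul]

lemma lintegral_Ioc_zero_rpow_sub_one {γ : ℝ} (hγ : 0 < γ) {a : ℝ} (ha : 0 ≤ a) :
    ∫⁻ t in Ioc 0 a, ENNReal.ofReal (t ^ (γ - 1)) = ENNReal.ofReal (a ^ γ / γ) := by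
  have hint : IntegrableOn (fun t : ℝ => t ^ (γ - 1)) (Ioc 0 a) :=
    (intervalIntegrable_iff_integrableOn_Ioc_of_le ha).1
      (intervalIntegral.intervalIntegrable_rpow' (by linarith))
  rw [← ofReal_integral_eq_lintegral_ofReal hint
    ((ae_restrict_mem measurableSet_Ioc).mono fun t ht => Real.rpow_nonneg ht.1.le _),
    ← intervalIntegral.integral_of_le ha, integral_rpow (Or.inl (by linarith)),
    sub_add_cancel, Real.zero_rpow hγ.ne', sub_zero]

lemma lintegral_Ioc_inv {a b : ℝ} (ha : 0 < a) (hab : a ≤ b) :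
    ∫⁻ t in Ioc a b, ENNReal.ofReal t⁻¹ = ENNReal.ofReal (Real.log (b / a)) := by
  have hint : IntegrableOn (fun t : ℝ => t⁻¹) (Ioc a b) :=
    (intervalIntegrable_iff_integrableOn_Ioc_of_le hab).1
      (intervalIntegral.intervalIntegrable_inv
        (fun t ht => (ha.trans_le (uIcc_of_le hab ▸ ht).1).ne') continuousOn_id)
  rw [← ofReal_integral_eq_lintegral_ofReal hint
    ((ae_restrict_mem measurableSet_Ioc).mono fun t ht => inv_nonneg.2 (ha.trans ht.1).le),
    ← intervalIntegral.integral_of_le hab, integral_inv_of_pos ha (ha.trans_le hab)]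

lemma measure_mul_gt_eq_setLIntegral_map {Ω : Type*} [MeasurableSpace Ω] (μ : Measure Ω)
    [IsFiniteMeasure μ] {V W : Ω → ℝ} (hV : Measurable V) (hW : Measurable W)
    (hW0 : ∀ᵐ ω ∂μ, 0 ≤ W ω) (hVW : IndepFun V W μ) {z : ℝ} (hz : 0 < z) :
    μ {ω | V ω * W ω > z} = ∫⁻ v in Ioi 0, μ.map W (Ioi (z / v)) ∂μ.map V := by
  have hs : MeasurableSet {p : ℝ × ℝ | p.1 * p.2 > z} :=
    measurableSet_lt measurable_const (measurable_fst.mul measurable_snd)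
  have hneg : μ.map W (Iio 0) = 0 := by
    rw [Measure.map_apply hW measurableSet_Iio]
    exact measure_mono_null (fun ω hω => not_le.2 hω) (ae_iff.1 hW0)
  calc μ {ω | V ω * W ω > z}
      = (μ.map V).prod (μ.map W) {p : ℝ × ℝ | p.1 * p.2 > z} := by
        rw [← hVW.map_prod_eq_prod_map_map hV.aemeasurable hW.aemeasurable,
          Measure.map_apply (hV.prodMk hW) hs]
        rfl
    _ = ∫⁻ v, (Ioi 0).indicator (fun v => μ.map W (Ioi (z / v))) v ∂μ.map V := by
        rw [Measure.prod_apply hs]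
        refine lintegral_congr fun v => ?_
        rcases lt_or_ge 0 v with hv | hv
        · rw [indicator_of_mem (mem_Ioi.2 hv)]
          congr 1
          ext w
          simp only [mem_preimage, mem_ofPred_eq, mem_Ioi, div_lt_iff₀ hv, mul_comm w]
        · rw [indicator_of_notMem (notMem_Ioi.2 hv)]
          refine measure_mono_null (fun w hw => ?_) hneg
          simp only [mem_preimage, mem_ofPred_eq] at hw
          exact (mem_Iio.2 (by nlinarith))
    _ = ∫⁻ v in Ioi 0, μ.map W (Ioi (z / v)) ∂μ.map V := lintegral_indicator measurableSet_Ioi _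

lemma eventually_tail_bounds_of_tendsto_div (ν : Measure ℝ) [IsFiniteMeasure ν] {g : ℝ → ℝ}
    (htail : Tendsto (fun u => (ν (Ioi u)).toReal / g u) atTop (𝓝 1))
    (hg : ∀ᶠ u in atTop, 0 < g u) {δ : ℝ} (hδ : 0 < δ) :
    ∀ᶠ u in atTop, ENNReal.ofReal ((1 - δ) * g u) ≤ ν (Ioi u)
      ∧ ν (Ioi u) ≤ ENNReal.ofReal ((1 + δ) * g u) := by
  filter_upwards [htail.eventually (Icc_mem_nhds (sub_lt_self 1 hδ) (lt_add_of_pos_right 1 hδ)),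
    hg] with u ⟨hlow, hup⟩ hgu
  rw [ENNReal.ofReal_le_iff_le_toReal (measure_ne_top ν _),
    ENNReal.le_ofReal_iff_toReal_le (measure_ne_top ν _) (by nlinarith)]
  exact ⟨(le_div_iff₀ hgu).1 hlow, (div_le_iff₀ hgu).1 hup⟩

section TruncatedMoment

variable (ν : Measure ℝ) {γ : ℝ}

lemma lintegral_Ioc_rpow_eq_lintegral_measure_Ioc (hγ : 0 < γ) {x : ℝ} (hx : 0 ≤ x) :
    ∫⁻ v in Ioc 0 x, ENNReal.ofReal (v ^ γ) ∂ν
      = ENNReal.ofReal γ * ∫⁻ t in Ioc 0 x, ν (Ioc t x) * ENNReal.ofReal (t ^ (γ - 1)) := by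
  rw [lintegral_rpow_eq_lintegral_meas_lt_mul (ν.restrict (Ioc 0 x)) (f := fun v => v)
      ((ae_restrict_mem measurableSet_Ioc).mono fun v hv => hv.1.le) aemeasurable_id hγ,
    ← Ioc_union_Ioi_eq_Ioi hx, lintegral_union measurableSet_Ioi Ioc_disjoint_Ioi_same]
  have hlayer : ∀ t, 0 < t → (ν.restrict (Ioc 0 x)) {v | t < v} = ν (Ioc t x) := fun t ht => by
    rw [show {v : ℝ | t < v} = Ioi t from rfl, Measure.restrict_apply measurableSet_Ioi]
    congr 1
    ext v
    simp only [mem_inter_iff, mem_Ioi, mem_Ioc]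
    exact ⟨fun h => ⟨h.1, h.2.2⟩, fun h => ⟨h.1, ht.trans h.1, h.2⟩⟩
  rw [setLIntegral_congr_fun measurableSet_Ioc fun t ht => by rw [hlayer t ht.1],
    setLIntegral_congr_fun measurableSet_Ioi fun t ht => by
      rw [hlayer t (hx.trans_lt ht), Ioc_eq_empty (not_lt.2 (le_of_lt ht)), measure_empty,
        zero_mul],
    lintegral_zero, add_zero]

lemma lintegral_Ioc_rpow_le [IsProbabilityMeasure ν] (hγ : 0 < γ) {c A x : ℝ} (hc : 0 ≤ c)
    (hA : 0 < A) (hAx : A ≤ x) (htail : ∀ s ≥ A, ν (Ioi s) ≤ ENNReal.ofReal (c * s ^ (-γ))) :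
    ∫⁻ v in Ioc 0 x, ENNReal.ofReal (v ^ γ) ∂ν
      ≤ ENNReal.ofReal (A ^ γ + γ * c * Real.log (x / A)) := by
  have hlog : 0 ≤ Real.log (x / A) := Real.log_nonneg ((one_le_div hA).2 hAx)
  have hsmall : ∫⁻ t in Ioc 0 A, ν (Ioc t x) * ENNReal.ofReal (t ^ (γ - 1))
      ≤ ENNReal.ofReal (A ^ γ / γ) :=
    (lintegral_mono fun t => mul_le_of_le_one_left zero_le prob_le_one).trans_eq
      (lintegral_Ioc_zero_rpow_sub_one hγ hA.le)
  have hlarge : ∫⁻ t in Ioc A x, ν (Ioc t x) * ENNReal.ofReal (t ^ (γ - 1))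
      ≤ ENNReal.ofReal (c * Real.log (x / A)) := by
    calc ∫⁻ t in Ioc A x, ν (Ioc t x) * ENNReal.ofReal (t ^ (γ - 1))
        ≤ ∫⁻ t in Ioc A x, ENNReal.ofReal c * ENNReal.ofReal t⁻¹ := by
          refine setLIntegral_mono' measurableSet_Ioc fun t ht => ?_
          have ht0 : 0 < t := hA.trans ht.1
          calc ν (Ioc t x) * ENNReal.ofReal (t ^ (γ - 1))
              ≤ ENNReal.ofReal (c * t ^ (-γ)) * ENNReal.ofReal (t ^ (γ - 1)) :=
                mul_le_mul_left
                  ((measure_mono Ioc_subset_Ioi_self).trans (htail t ht.1.le)) _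
            _ = ENNReal.ofReal c * ENNReal.ofReal t⁻¹ := by
                rw [← ENNReal.ofReal_mul' (Real.rpow_nonneg ht0.le _), mul_assoc,
                  rpow_neg_mul_rpow_sub_one ht0, ENNReal.ofReal_mul hc]
      _ = ENNReal.ofReal (c * Real.log (x / A)) := by
          rw [lintegral_const_mul _ (by fun_prop), lintegral_Ioc_inv hA hAx,
            ENNReal.ofReal_mul hc]
  calc ∫⁻ v in Ioc 0 x, ENNReal.ofReal (v ^ γ) ∂ν
      = ENNReal.ofReal γ * ((∫⁻ t in Ioc 0 A, ν (Ioc t x) * ENNReal.ofReal (t ^ (γ - 1)))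
          + ∫⁻ t in Ioc A x, ν (Ioc t x) * ENNReal.ofReal (t ^ (γ - 1))) := by
        rw [lintegral_Ioc_rpow_eq_lintegral_measure_Ioc ν hγ (hA.le.trans hAx),
          ← Ioc_union_Ioc_eq_Ioc hA.le hAx,
          lintegral_union measurableSet_Ioc (Ioc_disjoint_Ioc_of_le le_rfl)]
    _ ≤ ENNReal.ofReal γ
          * (ENNReal.ofReal (A ^ γ / γ) + ENNReal.ofReal (c * Real.log (x / A))) := by
        gcongr
    _ = ENNReal.ofReal (A ^ γ + γ * c * Real.log (x / A)) := by
        rw [← ENNReal.ofReal_add (by positivity) (by positivity), ← ENNReal.ofReal_mul hγ.le,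
          mul_add, mul_div_cancel₀ _ hγ.ne', mul_assoc]

lemma le_lintegral_Ioc_rpow [IsFiniteMeasure ν] (hγ : 0 < γ) {b c A x : ℝ} (hc : 0 ≤ c)
    (hA : 0 < A) (hAx : A ≤ x) (hlow : ∀ s ≥ A, ENNReal.ofReal (b * s ^ (-γ)) ≤ ν (Ioi s))
    (hup : ν (Ioi x) ≤ ENNReal.ofReal (c * x ^ (-γ))) :
    ENNReal.ofReal (γ * b * Real.log (x / A) - c) ≤ ∫⁻ v in Ioc 0 x, ENNReal.ofReal (v ^ γ) ∂ν := by
  have hx : 0 < x := hA.trans_le hAx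
  set f : ℝ → ℝ≥0∞ := fun t => ENNReal.ofReal (t ^ (γ - 1))
  have hmain : ENNReal.ofReal (b * Real.log (x / A)) ≤ ∫⁻ t in Ioc A x, ν (Ioi t) * f t := by
    calc ENNReal.ofReal (b * Real.log (x / A))
        = ∫⁻ t in Ioc A x, ENNReal.ofReal b * ENNReal.ofReal t⁻¹ := by
          rw [lintegral_const_mul _ (by fun_prop), lintegral_Ioc_inv hA hAx,
            ENNReal.ofReal_mul' (Real.log_nonneg ((one_le_div hA).2 hAx))]
      _ ≤ ∫⁻ t in Ioc A x, ν (Ioi t) * f t := by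
          refine setLIntegral_mono' measurableSet_Ioc fun t ht => ?_
          have ht0 : 0 < t := hA.trans ht.1
          calc ENNReal.ofReal b * ENNReal.ofReal t⁻¹
              = ENNReal.ofReal (b * t ^ (-γ)) * f t := by
                rw [← ENNReal.ofReal_mul' (Real.rpow_nonneg ht0.le _), mul_assoc,
                  rpow_neg_mul_rpow_sub_one ht0, ENNReal.ofReal_mul' (inv_nonneg.2 ht0.le)]
            _ ≤ ν (Ioi t) * f t := mul_le_mul_left (hlow t ht.1.le) _
  have hcorr : ∫⁻ t in Ioc A x, ν (Ioi x) * f t ≤ ENNReal.ofReal (c / γ) := by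
    calc ∫⁻ t in Ioc A x, ν (Ioi x) * f t
        ≤ ENNReal.ofReal (c * x ^ (-γ)) * ∫⁻ t in Ioc 0 x, f t := by
          rw [lintegral_const_mul _ (by fun_prop)]
          exact mul_le_mul' hup (lintegral_mono_set (Ioc_subset_Ioc_left hA.le))
      _ = ENNReal.ofReal (c / γ) := by
          rw [lintegral_Ioc_zero_rpow_sub_one hγ hx.le, ← ENNReal.ofReal_mul (by positivity)]
          congr 1
          rw [mul_div_assoc', mul_assoc, ← Real.rpow_add hx, neg_add_cancel, Real.rpow_zero,
            mul_one]
  calc ENNReal.ofReal (γ * b * Real.log (x / A) - c)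
      = ENNReal.ofReal γ * (ENNReal.ofReal (b * Real.log (x / A)) - ENNReal.ofReal (c / γ)) := by
        rw [← ENNReal.ofReal_sub _ (by positivity), ← ENNReal.ofReal_mul hγ.le, mul_sub,
          mul_div_cancel₀ _ hγ.ne', mul_assoc]
    _ ≤ ENNReal.ofReal γ
          * ((∫⁻ t in Ioc A x, ν (Ioi t) * f t) - ∫⁻ t in Ioc A x, ν (Ioi x) * f t) :=
        mul_le_mul_right (tsub_le_tsub hmain hcorr) _
    _ ≤ ENNReal.ofReal γ * ∫⁻ t in Ioc A x, (ν (Ioi t) * f t - ν (Ioi x) * f t) :=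
        mul_le_mul_right (lintegral_sub_le _ _
          (measurable_const.mul (measurable_id.pow_const _).ennreal_ofReal)) _
    _ = ENNReal.ofReal γ * ∫⁻ t in Ioc A x, ν (Ioc t x) * f t := by
        congr 1
        refine setLIntegral_congr_fun measurableSet_Ioc fun t ht => ?_
        rw [← ENNReal.sub_mul fun _ _ => ENNReal.ofReal_ne_top, ← measure_sdiff
          (Ioi_subset_Ioi ht.2) measurableSet_Ioi.nullMeasurableSet (measure_ne_top ν _),
          Ioi_sdiff_Ioi]
    _ ≤ ENNReal.ofReal γ * ∫⁻ t in Ioc 0 x, ν (Ioc t x) * f t := by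
        gcongr
    _ = ∫⁻ v in Ioc 0 x, ENNReal.ofReal (v ^ γ) ∂ν :=
        (lintegral_Ioc_rpow_eq_lintegral_measure_Ioc ν hγ hx.le).symm

end TruncatedMoment

section ProductTail

variable (ν ρ : Measure ℝ) {γ A z : ℝ}

lemma lintegral_measure_Ioi_div_le [IsProbabilityMeasure ν] [IsProbabilityMeasure ρ]
    (hγ : 0 < γ) {cV cW : ℝ} (hcV : 0 ≤ cV) (hcW : 0 ≤ cW) (hA : 1 ≤ A) (hz : A * A ≤ z)
    (hV : ∀ s ≥ A, ν (Ioi s) ≤ ENNReal.ofReal (cV * s ^ (-γ)))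
    (hW : ∀ s ≥ A, ρ (Ioi s) ≤ ENNReal.ofReal (cW * s ^ (-γ))) :
    ∫⁻ v in Ioi 0, ρ (Ioi (z / v)) ∂ν
      ≤ ENNReal.ofReal (γ * cV * cW * Real.log z * z ^ (-γ) + (cV + cW) * A ^ γ * z ^ (-γ)) := by
  have hA0 : 0 < A := one_pos.trans_le hA
  have hzA : A ≤ z / A := (le_div_iff₀ hA0).2 hz
  have hz0 : 0 < z := (mul_pos hA0 hA0).trans_le hz
  have hsmall : ∫⁻ v in Ioc 0 (z / A), ρ (Ioi (z / v)) ∂ν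
      ≤ ENNReal.ofReal (cW * z ^ (-γ))
          * ENNReal.ofReal (A ^ γ + γ * cV * Real.log (z / A / A)) := by
    calc ∫⁻ v in Ioc 0 (z / A), ρ (Ioi (z / v)) ∂ν
        ≤ ∫⁻ v in Ioc 0 (z / A), ENNReal.ofReal (cW * z ^ (-γ)) * ENNReal.ofReal (v ^ γ) ∂ν := by
          refine setLIntegral_mono' measurableSet_Ioc fun v hv => ?_
          rw [← ENNReal.ofReal_mul (by positivity), mul_assoc, ← div_rpow_neg hz0.le hv.1.le]
          exact hW _ ((le_div_iff₀ hv.1).2 ((le_div_iff₀' hA0).1 hv.2))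
      _ ≤ _ := by
          rw [lintegral_const_mul _ (by fun_prop)]
          exact mul_le_mul_right (lintegral_Ioc_rpow_le ν hγ hcV hA0 hzA hV) _
  have hlarge : ∫⁻ v in Ioi (z / A), ρ (Ioi (z / v)) ∂ν ≤ ENNReal.ofReal (cV * A ^ γ * z ^ (-γ)) :=
    calc ∫⁻ v in Ioi (z / A), ρ (Ioi (z / v)) ∂ν
        ≤ ν (Ioi (z / A)) := (setLIntegral_mono' measurableSet_Ioi fun _ _ => prob_le_one).trans_eq
          (setLIntegral_one _)
      _ ≤ _ := by rw [mul_assoc, mul_comm (A ^ γ), ← div_rpow_neg hz0.le hA0.le]; exact hV _ hzA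
  have hlog0 : 0 ≤ Real.log (z / A / A) := Real.log_nonneg ((one_le_div hA0).2 hzA)
  have hlog : Real.log (z / A / A) ≤ Real.log z :=
    Real.log_le_log (by positivity) (div_le_self (div_nonneg hz0.le hA0.le) hA |>.trans
      (div_le_self hz0.le hA))
  calc ∫⁻ v in Ioi 0, ρ (Ioi (z / v)) ∂ν
      = (∫⁻ v in Ioc 0 (z / A), ρ (Ioi (z / v)) ∂ν) + ∫⁻ v in Ioi (z / A), ρ (Ioi (z / v)) ∂ν := by
        rw [← Ioc_union_Ioi_eq_Ioi (div_pos hz0 hA0).le,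
          lintegral_union measurableSet_Ioi Ioc_disjoint_Ioi_same]
    _ ≤ ENNReal.ofReal (cW * z ^ (-γ) * (A ^ γ + γ * cV * Real.log (z / A / A))
          + cV * A ^ γ * z ^ (-γ)) := by
        rw [ENNReal.ofReal_add (by positivity) (by positivity), ENNReal.ofReal_mul (by positivity)]
        exact add_le_add hsmall hlarge
    _ ≤ _ := by
        refine ENNReal.ofReal_le_ofReal ?_
        have : 0 ≤ cW * z ^ (-γ) * (γ * cV) := by positivity
        nlinarith

lemma le_lintegral_measure_Ioi_div [IsFiniteMeasure ν] (hγ : 0 < γ) {bV cV bW : ℝ} (hcV : 0 ≤ cV)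
    (hbW : 0 ≤ bW) (hA : 1 ≤ A) (hz : A * A ≤ z)
    (hVlow : ∀ s ≥ A, ENNReal.ofReal (bV * s ^ (-γ)) ≤ ν (Ioi s))
    (hVup : ∀ s ≥ A, ν (Ioi s) ≤ ENNReal.ofReal (cV * s ^ (-γ)))
    (hWlow : ∀ s ≥ A, ENNReal.ofReal (bW * s ^ (-γ)) ≤ ρ (Ioi s)) :
    ENNReal.ofReal (γ * bV * bW * Real.log z * z ^ (-γ)
        - (2 * γ * bV * bW * Real.log A + cV * bW) * z ^ (-γ))
      ≤ ∫⁻ v in Ioi 0, ρ (Ioi (z / v)) ∂ν := by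
  have hA0 : 0 < A := one_pos.trans_le hA
  have hzA : A ≤ z / A := (le_div_iff₀ hA0).2 hz
  have hz0 : 0 < z := (mul_pos hA0 hA0).trans_le hz
  have hlog : Real.log (z / A / A) = Real.log z - 2 * Real.log A := by
    rw [Real.log_div (by positivity) hA0.ne', Real.log_div hz0.ne' hA0.ne']
    ring
  calc ENNReal.ofReal (γ * bV * bW * Real.log z * z ^ (-γ)
        - (2 * γ * bV * bW * Real.log A + cV * bW) * z ^ (-γ))
      = ENNReal.ofReal (bW * z ^ (-γ)) * ENNReal.ofReal (γ * bV * Real.log (z / A / A) - cV) := by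
        rw [← ENNReal.ofReal_mul (by positivity), hlog]
        ring_nf
    _ ≤ ∫⁻ v in Ioc 0 (z / A), ENNReal.ofReal (bW * z ^ (-γ)) * ENNReal.ofReal (v ^ γ) ∂ν := by
        rw [lintegral_const_mul _ (by fun_prop)]
        exact mul_le_mul_right (le_lintegral_Ioc_rpow ν hγ hcV hA0 hzA hVlow (hVup _ hzA)) _
    _ ≤ ∫⁻ v in Ioc 0 (z / A), ρ (Ioi (z / v)) ∂ν := by
        have hmeas : Measurable fun v : ℝ => ρ (Ioi (z / v)) :=
          (Antitone.measurable fun _ _ h => measure_mono (Ioi_subset_Ioi h)).comp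
            (measurable_const.div measurable_id)
        refine setLIntegral_mono hmeas fun v hv => ?_
        rw [← ENNReal.ofReal_mul (by positivity), mul_assoc, ← div_rpow_neg hz0.le hv.1.le]
        exact hWlow _ ((le_div_iff₀ hv.1).2 ((le_div_iff₀' hA0).1 hv.2))
    _ ≤ ∫⁻ v in Ioi 0, ρ (Ioi (z / v)) ∂ν := lintegral_mono_set Ioc_subset_Ioi_self

end ProductTail

lemma exists_abs_toReal_lintegral_measure_Ioi_div_sub_le (ν ρ : Measure ℝ)
    [IsProbabilityMeasure ν] [IsProbabilityMeasure ρ] {γ cV cW : ℝ} (hγ : 0 < γ) (hcV : 0 < cV)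
    (hcW : 0 < cW)
    (htailV : Tendsto (fun u => (ν (Ioi u)).toReal / (cV * u ^ (-γ))) atTop (𝓝 1))
    (htailW : Tendsto (fun u => (ρ (Ioi u)).toReal / (cW * u ^ (-γ))) atTop (𝓝 1))
    {δ : ℝ} (hδ : δ ∈ Ioo (0 : ℝ) 1) :
    ∃ K, ∀ᶠ z in atTop,
      |(∫⁻ v in Ioi 0, ρ (Ioi (z / v)) ∂ν).toReal - γ * cV * cW * Real.log z * z ^ (-γ)|
        ≤ 3 * δ * (γ * cV * cW * Real.log z * z ^ (-γ)) + K * z ^ (-γ) := by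
  obtain ⟨hδ0, hδ1⟩ := hδ
  have hpos : ∀ {c : ℝ}, 0 < c → ∀ᶠ u in atTop, 0 < c * u ^ (-γ) := fun hc =>
    (eventually_gt_atTop 0).mono fun u hu => by positivity
  obtain ⟨A, hA⟩ := eventually_atTop.1
    (((eventually_tail_bounds_of_tendsto_div ν htailV (hpos hcV) hδ0).and
      (eventually_tail_bounds_of_tendsto_div ρ htailW (hpos hcW) hδ0)).and
      (eventually_ge_atTop 1))
  simp only [← mul_assoc] at hA
  have hA1 : 1 ≤ A := (hA A le_rfl).2
  have hlogA : 0 ≤ Real.log A := Real.log_nonneg hA1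
  have h1δ : 0 < 1 - δ := sub_pos.2 hδ1
  set KU := (1 + δ) * (cV + cW) * A ^ γ
  set KL := 2 * γ * ((1 - δ) * cV) * ((1 - δ) * cW) * Real.log A + (1 + δ) * cV * ((1 - δ) * cW)
  refine ⟨KU + KL, ?_⟩
  filter_upwards [eventually_ge_atTop (A * A)] with z hz
  have hz1 : 1 ≤ z := by nlinarith
  have hz0 : 0 < z := one_pos.trans_le hz1
  have hlogz : 0 ≤ Real.log z := Real.log_nonneg hz1
  set D := γ * cV * cW * Real.log z * z ^ (-γ)
  set P := (∫⁻ v in Ioi 0, ρ (Ioi (z / v)) ∂ν).toReal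
  have hD : 0 ≤ D := by positivity
  have hE : 0 ≤ z ^ (-γ) := by positivity
  have hup := lintegral_measure_Ioi_div_le ν ρ hγ (by positivity) (by positivity) hA1 hz
    (fun s hs => (hA s hs).1.1.2) (fun s hs => (hA s hs).1.2.2)
  have hlow := le_lintegral_measure_Ioi_div ν ρ hγ (by positivity) (by positivity) hA1 hz
    (fun s hs => (hA s hs).1.1.1) (fun s hs => (hA s hs).1.1.2) (fun s hs => (hA s hs).1.2.1)
  have hP_le : P ≤ (1 + δ) ^ 2 * D + KU * z ^ (-γ) :=
    (ENNReal.toReal_le_of_le_ofReal (by positivity) hup).trans_eq (by simp only [D, KU]; ring)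
  have hP_ge : (1 - δ) ^ 2 * D - KL * z ^ (-γ) ≤ P :=
    (le_of_eq (by simp only [D, KL]; ring)).trans
      ((ENNReal.ofReal_le_iff_le_toReal (ne_top_of_le_ne_top ENNReal.ofReal_ne_top hup)).1 hlow)
  have hδD : 0 ≤ δ * (1 - δ) * D := by positivity
  rw [abs_sub_le_iff]
  constructor
  · nlinarith [mul_nonneg (by positivity : 0 ≤ KL) hE]
  · nlinarith [mul_nonneg (by positivity : 0 ≤ KU) hE, mul_nonneg (sq_nonneg δ) hD]

theorem stmt7_general {Ω : Type*} [MeasurableSpace Ω] (μ : Measure Ω) [IsProbabilityMeasure μ]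
    (V W : Ω → ℝ) (hVmeas : Measurable V) (hWmeas : Measurable W)
    (hWpos : ∀ ω, 0 ≤ W ω)
    (hindep : IndepFun V W μ)
    (γ cV cW : ℝ) (hγ : γ ∈ Set.Ioo (0:ℝ) 2) (hcV : 0 < cV) (hcW : 0 < cW)
    (htailV : Tendsto (fun v : ℝ => (μ {ω | V ω > v}).toReal / (cV * v ^ (-γ)))
      atTop (nhds 1))
    (htailW : Tendsto (fun w : ℝ => (μ {ω | W ω > w}).toReal / (cW * w ^ (-γ)))
      atTop (nhds 1)) :
    Tendsto (fun z : ℝ =>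
        (μ {ω | V ω * W ω > z}).toReal / (γ * cV * cW * Real.log z * z ^ (-γ)))
      atTop (nhds 1) := by
  have := Measure.isProbabilityMeasure_map (μ := μ) hVmeas.aemeasurable
  have := Measure.isProbabilityMeasure_map (μ := μ) hWmeas.aemeasurable
  have hD : ∀ᶠ z in atTop, 0 < γ * cV * cW * Real.log z * z ^ (-γ) :=
    (eventually_gt_atTop 1).mono fun z hz => by
      have := Real.log_pos hz; have := hγ.1; positivity
  have hE : (fun z : ℝ => z ^ (-γ)) =o[atTop] fun z => γ * cV * cW * Real.log z * z ^ (-γ) := by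
    simpa using ((Real.isLittleO_const_log_atTop (c := 1)).const_mul_right
      (by have := hγ.1; positivity : γ * cV * cW ≠ 0)).mul_isBigO
      (isBigO_refl (fun z : ℝ => z ^ (-γ)) _)
  refine (isEquivalent_iff_tendsto_one (hD.mono fun z hz => hz.ne')).1
    (isEquivalent_of_forall_norm_sub_le hE fun δ hδ => ?_)
  obtain ⟨K, hK⟩ := exists_abs_toReal_lintegral_measure_Ioi_div_sub_le (μ.map V) (μ.map W) hγ.1
    hcV hcW (by simp only [Measure.map_apply hVmeas measurableSet_Ioi]; exact htailV)
    (by simp only [Measure.map_apply hWmeas measurableSet_Ioi]; exact htailW)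
    (δ := δ / 3) ⟨by linarith [hδ.1], by linarith [hδ.2]⟩
  refine ⟨K, ?_⟩
  filter_upwards [hK, hD, eventually_gt_atTop 0] with z hz hDz hz0
  rw [measure_mul_gt_eq_setLIntegral_map μ hVmeas hWmeas (ae_of_all _ hWpos) hindep hz0,
    Real.norm_eq_abs, Real.norm_eq_abs, Real.norm_eq_abs, abs_of_pos hDz,
    abs_of_pos (Real.rpow_pos_of_pos hz0 _)]
  linarith

/-- if `V, W ≥ 0` are independent with `P(V > v) ~ c_V v^{-γ}` and
`P(W > w) ~ c_W w^{-γ}` for the same `γ ∈ (0,2)`, then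
`P(V·W > z) ~ γ c_V c_W log(z) z^{-γ}` as `z → ∞`. -/
theorem stmt7 {Ω : Type*} [MeasurableSpace Ω] (μ : Measure Ω) [IsProbabilityMeasure μ]
    (V W : Ω → ℝ) (hVmeas : Measurable V) (hWmeas : Measurable W)
    (hVpos : ∀ ω, 0 ≤ V ω) (hWpos : ∀ ω, 0 ≤ W ω)
    (hindep : IndepFun V W μ)
    (γ cV cW : ℝ) (hγ : γ ∈ Set.Ioo (0:ℝ) 2) (hcV : 0 < cV) (hcW : 0 < cW)
    (htailV : Tendsto (fun v : ℝ => (μ {ω | V ω > v}).toReal / (cV * v ^ (-γ)))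
      atTop (nhds 1))
    (htailW : Tendsto (fun w : ℝ => (μ {ω | W ω > w}).toReal / (cW * w ^ (-γ)))
      atTop (nhds 1)) :
    Tendsto (fun z : ℝ =>
        (μ {ω | V ω * W ω > z}).toReal / (γ * cV * cW * Real.log z * z ^ (-γ)))
      atTop (nhds 1) :=
  stmt7_general μ V W hVmeas hWmeas hWpos hindep γ cV cW hγ hcV hcW htailV htailW
end
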